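/- Let n ≥ 2 and let Φ₁, …, Φ_{n-1} be independent random variables uniformly distributed on [0, π/2]. Define the eigenvalues Λ_j = cos²(Φ_j)·∏_{i=1}^{j-1} sin²(Φ_i) for 1 ≤ j ≤ n−1 and Λ_n = ∏_{i=1}^{n-1} sin²(Φ_i), and the von Neumann entropy S_n = −∑_{j=1}^{n} Λ_j · ln Λ_j. Then the expectation satisfies E[S_n] = (ln 2 − 1/2)·(4 − 1/2^{n-3}) = (ln 2 − 1/2)·(4 − 2^{3-n}). -/

import Mathlib

open MeasureTheory Real

/-- The uniform probability measure on the interval `[0, π/2]`. -/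
noncomputable def uniformHalfPi : Measure ℝ :=
  ENNReal.ofReal (2 / Real.pi) • volume.restrict (Set.Icc 0 (Real.pi / 2))

/-- The eigenvalue `Λ` with 0-based index `j`:
`Λ_j(φ) = cos²(φ j) ∏_{i<j} sin²(φ i)`. -/
noncomputable def Lam (m : ℕ) (j : Fin m) (φ : Fin m → ℝ) : ℝ :=
  Real.cos (φ j) ^ 2 * ∏ i ∈ Finset.univ.filter (fun i : Fin m => i < j), Real.sin (φ i) ^ 2

/-!
Splitting off the first angle `x`, the spectrum is `cos² x` together with `sin² x` times the
spectrum built from the remaining angles. The grouping property of entropy gives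
`S_{m+1} = h(sin² x) + sin² x · S_m` with `h` the binary entropy, so by independence
`E[S_{m+1}] = E[h(sin² Φ)] + E[sin² Φ] · E[S_m] = (2 ln 2 - 1) + E[S_m] / 2`.
The value of `E[h(sin² Φ)]` reduces to `∫₀^{π/2} log sin = -(π/2) ln 2`, because
`cos x · negMulLog (sin x)`, which vanishes at `0` and `π/2`, has derivative
`-(negMulLog (sin² x) + log (sin x) + cos² x)`.
-/

lemma integrable_and_integral_pi_of_cons_eq {α : Type*} [MeasurableSpace α] {μ : Measure α}
    [IsProbabilityMeasure μ] {m : ℕ} {F : (Fin (m + 1) → α) → ℝ} {G : (Fin m → α) → ℝ}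
    {a b : α → ℝ} (hF : ∀ x ψ, F (Fin.cons x ψ) = a x + b x * G ψ)
    (ha : Integrable a μ) (hb : Integrable b μ) (hG : Integrable G (Measure.pi fun _ => μ)) :
    Integrable F (Measure.pi fun _ => μ) ∧
      ∫ φ, F φ ∂(Measure.pi fun _ => μ) =
        ∫ x, a x ∂μ + (∫ x, b x ∂μ) * ∫ ψ, G ψ ∂(Measure.pi fun _ => μ) := by
  set e := (MeasurableEquiv.piFinSuccAbove (fun _ : Fin (m + 1) => α) 0).symm
  have he : MeasurePreserving e (μ.prod (Measure.pi fun _ => μ)) (Measure.pi fun _ => μ) :=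
    (measurePreserving_piFinSuccAbove (fun _ => μ) 0).symm
  have hFe : F ∘ e = fun p => a p.1 + b p.1 * G p.2 := by
    funext p
    simp [e, MeasurableEquiv.piFinSuccAbove_symm_apply, Fin.insertNthEquiv, hF]
  have hint : Integrable (F ∘ e) (μ.prod (Measure.pi fun _ => μ)) :=
    hFe ▸ (ha.comp_fst _).add (hb.mul_prod hG)
  refine ⟨(he.integrable_comp_emb e.measurableEmbedding).1 hint, ?_⟩
  rw [← he.integral_comp' F]
  change ∫ p, (F ∘ e) p ∂_ = _
  rw [hFe, integral_add (ha.comp_fst _) (hb.mul_prod hG), integral_fun_fst, integral_prod_mul,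
    probReal_univ, one_smul]

lemma hasDerivAt_cos_mul_negMulLog_sin {x : ℝ} (hx : sin x ≠ 0) :
    HasDerivAt (fun x => cos x * negMulLog (sin x))
      (-(negMulLog (sin x ^ 2) + log (sin x) + cos x ^ 2)) x := by
  refine ((hasDerivAt_cos x).mul
    ((hasDerivAt_negMulLog hx).comp x (hasDerivAt_sin x))).congr_deriv ?_
  simp only [Function.comp_apply, negMulLog, log_pow]
  push_cast
  linear_combination -log (sin x) * sin_sq_add_cos_sq x

lemma integral_negMulLog_sin_sq :
    ∫ x in 0..π / 2, negMulLog (sin x ^ 2) = π / 2 * log 2 - π / 4 := by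
  have h₁ : IntervalIntegrable (fun x => negMulLog (sin x ^ 2)) volume 0 (π / 2) :=
    (continuous_negMulLog.comp (continuous_sin.pow 2)).intervalIntegrable _ _
  have h₂ : IntervalIntegrable (fun x => log (sin x)) volume 0 (π / 2) :=
    intervalIntegrable_log_sin
  have h₃ : IntervalIntegrable (fun x => cos x ^ 2) volume 0 (π / 2) :=
    (continuous_cos.pow 2).intervalIntegrable _ _
  have hFTC := intervalIntegral.integral_eq_sub_of_hasDerivAt_of_le pi_div_two_pos.le
    (continuous_cos.mul (continuous_negMulLog.comp continuous_sin)).continuousOn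
    (fun x hx => hasDerivAt_cos_mul_negMulLog_sin
      (sin_pos_of_pos_of_lt_pi hx.1 (by linarith [hx.2, pi_pos])).ne')
    ((h₁.add h₂).add h₃).neg
  rw [intervalIntegral.integral_neg, intervalIntegral.integral_add (h₁.add h₂) h₃,
    intervalIntegral.integral_add h₁ h₂, integral_log_sin_zero_pi_div_two, integral_cos_sq] at hFTC
  simp only [Pi.mul_apply, Function.comp_apply, cos_pi_div_two, sin_pi_div_two, cos_zero,
    sin_zero, negMulLog_zero] at hFTC
  linarith

lemma integral_negMulLog_cos_sq :
    ∫ x in 0..π / 2, negMulLog (cos x ^ 2) = π / 2 * log 2 - π / 4 := by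
  rw [← integral_negMulLog_sin_sq]
  simpa [sin_pi_div_two_sub] using intervalIntegral.integral_comp_sub_left
    (a := 0) (b := π / 2) (fun x => negMulLog (sin x ^ 2)) (π / 2)

instance : IsProbabilityMeasure uniformHalfPi := by
  constructor
  rw [uniformHalfPi, Measure.smul_apply, Measure.restrict_apply MeasurableSet.univ, Set.univ_inter,
    Real.volume_Icc, smul_eq_mul, ← ENNReal.ofReal_mul (by positivity),
    show 2 / π * (π / 2 - 0) = 1 by field_simp; ring]
  simp

lemma integral_uniformHalfPi (f : ℝ → ℝ) :
    ∫ x, f x ∂uniformHalfPi = 2 / π * ∫ x in 0..π / 2, f x := by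
  rw [uniformHalfPi, MeasureTheory.integral_smul_measure, ENNReal.toReal_ofReal (by positivity),
    intervalIntegral.integral_of_le pi_div_two_pos.le, integral_Icc_eq_integral_Ioc, smul_eq_mul]

lemma Continuous.integrable_uniformHalfPi {E : Type*} [NormedAddCommGroup E] {f : ℝ → E}
    (hf : Continuous f) : Integrable f uniformHalfPi :=
  hf.integrableOn_Icc.smul_measure ENNReal.ofReal_ne_top

lemma integral_binEntropy_sin_sq_uniformHalfPi :
    ∫ x, binEntropy (sin x ^ 2) ∂uniformHalfPi = 2 * log 2 - 1 := by
  simp only [binEntropy_eq_negMulLog_add_negMulLog_one_sub, ← cos_sq']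
  rw [integral_uniformHalfPi, intervalIntegral.integral_add
    ((by fun_prop : Continuous fun x => negMulLog (sin x ^ 2)).intervalIntegrable _ _)
    ((by fun_prop : Continuous fun x => negMulLog (cos x ^ 2)).intervalIntegrable _ _),
    integral_negMulLog_sin_sq, integral_negMulLog_cos_sq]
  field_simp
  ring

lemma integral_sin_sq_uniformHalfPi : ∫ x, sin x ^ 2 ∂uniformHalfPi = 1 / 2 := by
  rw [integral_uniformHalfPi, integral_sin_sq]
  simp only [sin_zero, cos_pi_div_two, sin_pi_div_two]
  field_simp
  ring

noncomputable def vonNeumannEntropy (m : ℕ) (φ : Fin m → ℝ) : ℝ :=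
  ∑ j, negMulLog (Lam m j φ) + negMulLog (∏ i, sin (φ i) ^ 2)

lemma Lam_cons_zero {m : ℕ} (x : ℝ) (ψ : Fin m → ℝ) :
    Lam (m + 1) 0 (Fin.cons x ψ) = cos x ^ 2 := by
  simp [Lam]

lemma Lam_cons_succ {m : ℕ} (j : Fin m) (x : ℝ) (ψ : Fin m → ℝ) :
    Lam (m + 1) j.succ (Fin.cons x ψ) = sin x ^ 2 * Lam m j ψ := by
  rw [Lam, Lam, Finset.prod_filter, Finset.prod_filter, Fin.prod_univ_succ]
  simp only [Fin.cons_zero, Fin.cons_succ, Fin.succ_pos, if_true, Fin.succ_lt_succ_iff]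
  ring

lemma sum_Lam_add_prod_sin_sq (m : ℕ) (φ : Fin m → ℝ) :
    ∑ j, Lam m j φ + ∏ i, sin (φ i) ^ 2 = 1 := by
  induction m with
  | zero => simp
  | succ m ih =>
    rw [← Fin.cons_self_tail φ, Fin.sum_univ_succ, Fin.prod_univ_succ]
    simp only [Lam_cons_zero, Lam_cons_succ, Fin.cons_zero, Fin.cons_succ, ← Finset.mul_sum]
    linear_combination sin (φ 0) ^ 2 * ih (Fin.tail φ) + sin_sq_add_cos_sq (φ 0)

lemma vonNeumannEntropy_cons {m : ℕ} (x : ℝ) (ψ : Fin m → ℝ) :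
    vonNeumannEntropy (m + 1) (Fin.cons x ψ) =
      binEntropy (sin x ^ 2) + sin x ^ 2 * vonNeumannEntropy m ψ := by
  simp only [vonNeumannEntropy, Fin.sum_univ_succ, Fin.prod_univ_succ, Lam_cons_zero,
    Lam_cons_succ, Fin.cons_zero, Fin.cons_succ, negMulLog_mul,
    binEntropy_eq_negMulLog_add_negMulLog_one_sub, ← cos_sq']
  rw [Finset.sum_add_distrib, ← Finset.sum_mul, ← Finset.mul_sum]
  linear_combination negMulLog (sin x ^ 2) * sum_Lam_add_prod_sin_sq m ψ

lemma integrable_and_integral_vonNeumannEntropy (m : ℕ) :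
    Integrable (vonNeumannEntropy m) (Measure.pi fun _ => uniformHalfPi) ∧
      ∫ φ, vonNeumannEntropy m φ ∂(Measure.pi fun _ => uniformHalfPi) =
        (log 2 - 1 / 2) * (4 - (2 : ℝ) ^ ((2 : ℤ) - m)) := by
  induction m with
  | zero =>
    have h : vonNeumannEntropy 0 = 0 := funext fun _ => by simp [vonNeumannEntropy]
    rw [h]
    norm_num
  | succ m ih =>
    obtain ⟨hint, hval⟩ := integrable_and_integral_pi_of_cons_eq vonNeumannEntropy_cons
      (binEntropy_continuous.comp (continuous_sin.pow 2)).integrable_uniformHalfPi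
      (continuous_sin.pow 2).integrable_uniformHalfPi ih.1
    refine ⟨hint, ?_⟩
    rw [hval, integral_binEntropy_sin_sq_uniformHalfPi, integral_sin_sq_uniformHalfPi, ih.2]
    push_cast
    rw [show (2 : ℤ) - (m + 1) = 2 - m - 1 by ring, zpow_sub_one₀ two_ne_zero]
    ring

/-- With independent `Φ_i` uniform on `[0, π/2]`, eigenvalues
`Λ_j = cos²(Φ_j) ∏_{i<j} sin²(Φ_i)` for `j = 1, …, n-1` and `Λ_n = ∏_i sin²(Φ_i)`,
the von Neumann entropy `S_n = −∑_{j=1}^n Λ_j ln Λ_j` has expectation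
`E[S_n] = (ln 2 − 1/2)(4 − 2^{3−n})`. -/
theorem stmt_14 (n : ℕ) (hn : 2 ≤ n) :
    ∫ φ : Fin (n - 1) → ℝ,
        -((∑ j : Fin (n - 1), Lam (n - 1) j φ * Real.log (Lam (n - 1) j φ)) +
          (∏ i, Real.sin (φ i) ^ 2) * Real.log (∏ i, Real.sin (φ i) ^ 2))
      ∂(Measure.pi fun _ : Fin (n - 1) => uniformHalfPi)
      = (Real.log 2 - 1 / 2) * (4 - (2 : ℝ) ^ ((3 : ℤ) - (n : ℤ))) := by
  have hS : ∀ φ : Fin (n - 1) → ℝ,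
      -((∑ j, Lam (n - 1) j φ * log (Lam (n - 1) j φ)) +
        (∏ i, sin (φ i) ^ 2) * log (∏ i, sin (φ i) ^ 2)) = vonNeumannEntropy (n - 1) φ := by
    intro φ
    simp only [vonNeumannEntropy, negMulLog, neg_mul, Finset.sum_neg_distrib, neg_add]
  have hexp : (2 : ℤ) - ((n - 1 : ℕ) : ℤ) = 3 - n := by omega
  simp only [hS, (integrable_and_integral_vonNeumannEntropy (n - 1)).2, hexp]
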